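/- arXiv:2405.02585 — 4 statements merged into one kernel-verified Lean document; each statement's English description precedes it below -/
import Mathlib

section
/- Let 𝒳 and 𝒴 be finite sets and let P_{Y|X} be a channel from 𝒳 to 𝒴 with P_{Y|X}(y|x) > 0 for all x ∈ 𝒳 and y ∈ 𝒴. Then the maximum, over all probability mass functions P_X on 𝒳 with full support and all y ∈ 𝒴, of the pointwise maximal guesswork leakage from X to y (i.e. of the supremum over finite sets 𝒰 and channels P_{U|X} of γ(P_U)/γ(P_{U|Y}(·|y))) equals max over x, x′ ∈ 𝒳 and y ∈ 𝒴 of P_{Y|X}(y|x) / P_{Y|X}(y|x′), the (exponentiated) local differential privacy parameter of P_{Y|X}. -/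
open Finset

/-- The guesswork of a pmf `P` on a finite set `U`: the minimum over all
guessing functions (bijections `G : U → {1,…,n}`) of `∑ u, G(u) · P(u)`. -/
noncomputable def guesswork {U : Type*} [Fintype U] (P : U → ℝ) : ℝ :=
  ⨅ G : U ≃ Fin (Fintype.card U), ∑ u, ((G u).val + 1 : ℝ) * P u

lemma guesswork_le {U : Type*} [Fintype U] (P : U → ℝ)
    (G : U ≃ Fin (Fintype.card U)) :
    guesswork P ≤ ∑ u, ((G u).val + 1 : ℝ) * P u :=
  ciInf_le (Set.finite_range _).bddBelow G

lemma le_guesswork {U : Type*} [Fintype U] (P : U → ℝ) (c : ℝ)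
    (h : ∀ G : U ≃ Fin (Fintype.card U), c ≤ ∑ u, ((G u).val + 1 : ℝ) * P u) :
    c ≤ guesswork P := by
  haveI : Nonempty (U ≃ Fin (Fintype.card U)) := ⟨Fintype.equivFin U⟩
  exact le_ciInf h

lemma one_le_guesswork {U : Type*} [Fintype U] (P : U → ℝ)
    (h0 : ∀ u, 0 ≤ P u) (h1 : ∑ u, P u = 1) : 1 ≤ guesswork P := by
  apply le_guesswork
  intro G
  calc (1:ℝ) = ∑ u, P u := h1.symm
    _ ≤ ∑ u, ((G u).val + 1 : ℝ) * P u := by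
        apply Finset.sum_le_sum
        intro u _
        nlinarith [h0 u, (G u).val.cast_nonneg (α := ℝ)]

lemma guesswork_le_mul {U : Type*} [Fintype U] (P P' : U → ℝ) (c : ℝ) (hc : 0 < c)
    (h : ∀ u, P u ≤ c * P' u) : guesswork P ≤ c * guesswork P' := by
  rw [mul_comm, ← div_le_iff₀ hc]
  apply le_guesswork
  intro G
  rw [div_le_iff₀ hc, mul_comm]
  calc guesswork P ≤ ∑ u, ((G u).val + 1 : ℝ) * P u := guesswork_le P G
    _ ≤ ∑ u, ((G u).val + 1 : ℝ) * (c * P' u) := by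
        apply Finset.sum_le_sum; intro u _
        apply mul_le_mul_of_nonneg_left (h u)
        positivity
    _ = c * ∑ u, ((G u).val + 1 : ℝ) * P' u := by rw [Finset.mul_sum]; apply Finset.sum_congr rfl; intros; ring

lemma gauss_fin (m : ℕ) : ∑ k : Fin m, ((k.val : ℝ) + 1) = m * (m + 1) / 2 := by
  induction m with
  | zero => simp
  | succ m ih =>
    rw [Fin.sum_univ_castSucc]
    simp only [Fin.coe_castSucc, Fin.val_last, ih]
    push_cast
    ring

lemma sum_G {n : ℕ} (G : Fin n ≃ Fin (Fintype.card (Fin n))) :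
    ∑ u : Fin n, (((G u).val : ℝ) + 1) = n * (n + 1) / 2 := by
  rw [Equiv.sum_comp G (fun k => ((k.val : ℝ) + 1)), gauss_fin, Fintype.card_fin]

noncomputable def distD (n : ℕ) (w : ℝ) : Fin n → ℝ :=
  fun u => w / n + if u.val = 0 then 1 - w else 0

lemma distD_nonneg {n : ℕ} {w : ℝ} (h0 : 0 ≤ w) (h1 : w ≤ 1) (u : Fin n) :
    0 ≤ distD n w u := by
  unfold distD
  have : (0:ℝ) ≤ w / n := by positivity
  split <;> linarith

lemma fin_val_eq_zero_iff {n : ℕ} (hn : 0 < n) (u : Fin n) :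
    u.val = 0 ↔ u = ⟨0, hn⟩ := by rw [Fin.ext_iff]

lemma distD_sum {n : ℕ} (hn : 0 < n) (w : ℝ) : ∑ u, distD n w u = 1 := by
  unfold distD
  simp only [fin_val_eq_zero_iff hn]
  rw [Finset.sum_add_distrib, Finset.sum_const, Finset.sum_ite_eq' Finset.univ (⟨0, hn⟩ : Fin n)]
  simp only [Finset.mem_univ, if_pos, Finset.card_univ, Fintype.card_fin, nsmul_eq_mul]
  have : (n:ℝ) ≠ 0 := Nat.cast_ne_zero.2 hn.ne'
  field_simp
  ring

lemma guesswork_distD_ge {n : ℕ} (hn : 0 < n) {w : ℝ} (h0 : 0 ≤ w) (h1 : w ≤ 1) :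
    w * ((n:ℝ) + 1) / 2 ≤ guesswork (distD n w) := by
  apply le_guesswork
  intro G
  have hsplit : ∑ u, ((G u).val + 1 : ℝ) * distD n w u
      = (w / n) * ∑ u : Fin n, (((G u).val : ℝ) + 1)
        + ((G ⟨0, hn⟩).val + 1 : ℝ) * (1 - w) := by
    unfold distD
    simp only [fin_val_eq_zero_iff hn]
    rw [Finset.mul_sum]
    rw [Finset.sum_congr rfl (fun u (_ : u ∈ Finset.univ) =>
      (show ((G u).val + 1 : ℝ) * (w / n + if u = ⟨0, hn⟩ then 1 - w else 0)
        = (w / n) * (((G u).val : ℝ) + 1) + (if u = ⟨0, hn⟩ then ((G u).val + 1 : ℝ) * (1 - w) else 0)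
      by split <;> ring))]
    rw [Finset.sum_add_distrib, Finset.sum_ite_eq' Finset.univ (⟨0, hn⟩ : Fin n)]
    simp
  rw [hsplit, sum_G G]
  have hn' : (0:ℝ) < n := Nat.cast_pos.2 hn
  have h2 : (0:ℝ) ≤ ((G ⟨0, hn⟩).val + 1 : ℝ) * (1 - w) :=
    mul_nonneg (by positivity) (by linarith)
  have : (w / n) * ((n:ℝ) * (n + 1) / 2) = w * ((n:ℝ) + 1) / 2 := by field_simp
  linarith [this]

lemma guesswork_distD_le {n : ℕ} (hn : 0 < n) {w : ℝ} (h0 : 0 ≤ w) :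
    guesswork (distD n w) ≤ w * ((n:ℝ) + 1) / 2 + 1 := by
  have G : Fin n ≃ Fin (Fintype.card (Fin n)) := finCongr (Fintype.card_fin n).symm
  refine le_trans (guesswork_le (distD n w) (finCongr (Fintype.card_fin n).symm)) ?_
  have hsplit : ∑ u : Fin n, (((finCongr (Fintype.card_fin n).symm u).val : ℝ) + 1) * distD n w u
      = (w / n) * ∑ u : Fin n, (((u).val : ℝ) + 1)
        + ((0:ℝ) + 1) * (1 - w) := by
    unfold distD
    simp only [fin_val_eq_zero_iff hn, finCongr_apply, Fin.coe_cast]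
    rw [Finset.mul_sum]
    rw [Finset.sum_congr rfl (fun u (_ : u ∈ Finset.univ) =>
      (show ((u).val + 1 : ℝ) * (w / n + if u = ⟨0, hn⟩ then 1 - w else 0)
        = (w / n) * (((u).val : ℝ) + 1) + (if u = ⟨0, hn⟩ then ((u).val + 1 : ℝ) * (1 - w) else 0)
      by split <;> ring))]
    rw [Finset.sum_add_distrib, Finset.sum_ite_eq' Finset.univ (⟨0, hn⟩ : Fin n)]
    simp
  rw [hsplit]
  have hg : ∑ u : Fin n, (((u).val : ℝ) + 1) = (n:ℝ) * (n + 1) / 2 := by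
    have := gauss_fin n
    simpa using this
  rw [hg]
  have hn' : (0:ℝ) < n := Nat.cast_pos.2 hn
  have : (w / n) * ((n:ℝ) * (n + 1) / 2) = w * ((n:ℝ) + 1) / 2 := by field_simp
  rw [this]
  linarith

lemma guesswork_fin_one (P : Fin 1 → ℝ) : guesswork P = P 0 := by
  have key : ∀ G : Fin 1 ≃ Fin (Fintype.card (Fin 1)),
      ∑ u, ((G u).val + 1 : ℝ) * P u = P 0 := by
    intro G
    rw [Fin.sum_univ_one]
    have h : (G 0).val < 1 := by simpa using (G 0).isLt
    have hz : (G 0).val = 0 := by omega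
    simp [hz]
  unfold guesswork
  simp only [key]
  haveI : Nonempty (Fin 1 ≃ Fin (Fintype.card (Fin 1))) := ⟨Fintype.equivFin _⟩
  exact ciInf_const

lemma sum_Q_eq {X : Type*} [Fintype X] [DecidableEq X] (x0 : X) (n : ℕ)
    (W : X → ℝ) (hW : ∑ x, W x = 1) (u : Fin n) :
    ∑ x, (if x = x0 then (1/(n:ℝ)) else if u.val = 0 then 1 else 0) * W x
      = distD n (W x0) u := by
  rw [← Finset.add_sum_erase _ _ (Finset.mem_univ x0)]
  rw [if_pos rfl]
  have h2 : ∑ x ∈ Finset.univ.erase x0,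
      (if x = x0 then (1/(n:ℝ)) else if u.val = 0 then 1 else 0) * W x
      = (if u.val = 0 then 1 else 0) * ∑ x ∈ Finset.univ.erase x0, W x := by
    rw [Finset.mul_sum]
    exact Finset.sum_congr rfl fun x hx => by rw [if_neg (Finset.mem_erase.1 hx).1]
  rw [h2, Finset.sum_erase_eq_sub (Finset.mem_univ x0), hW]
  unfold distD
  split <;> ring

lemma ratio_aux (b δ q0 t : ℝ) (hgap : 0 < δ - b * q0) (hq0 : 0 < q0)
    (ht : 0 ≤ t) (hn0' : 2 * b < (δ - b * q0) * t) :
    b < (δ * ((t + 1) + 1) / 2) / (q0 * ((t + 1) + 1) / 2 + 1) := by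
  have hBpos : (0:ℝ) < q0 * ((t + 1) + 1) / 2 + 1 := by positivity
  rw [lt_div_iff₀ hBpos]
  nlinarith [mul_pos hgap two_pos]

set_option maxHeartbeats 1000000

/-- **Guesswork and local differential privacy.**
For a channel `P_{Y|X}` with strictly positive entries between finite sets, the
maximum, over all full-support pmfs `P_X` on `𝒳` and all `y ∈ 𝒴`, of the
pointwise maximal guesswork leakage from `X` to `y` (the supremum over finite
sets `𝒰`, wlog `Fin n`, and channels `P_{U|X}` of `γ(P_U)/γ(P_{U|Y}(·|y))`)
equals `max_{x,x',y} P_{Y|X}(y|x)/P_{Y|X}(y|x')`, the exponentiated local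
differential privacy parameter of `P_{Y|X}`. -/
theorem guesswork_local_differential_privacy
    {X Y : Type*} [Fintype X] [Fintype Y] [Nonempty X] [Nonempty Y]
    (K : X → Y → ℝ)
    (hKpos : ∀ x y, 0 < K x y)
    (hKsum : ∀ x, ∑ y, K x y = 1) :
    sSup {L : ℝ | ∃ PX : X → ℝ, (∀ x, 0 < PX x) ∧ (∑ x, PX x = 1) ∧
        ∃ y : Y, L = sSup {r : ℝ | ∃ (n : ℕ) (Q : X → Fin n → ℝ),
          (∀ x u, 0 ≤ Q x u) ∧ (∀ x, ∑ u, Q x u = 1) ∧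
          r = guesswork (fun u => ∑ x, Q x u * PX x) /
              guesswork (fun u =>
                ∑ x, Q x u * (PX x * K x y / ∑ x', PX x' * K x' y))}} =
      ⨆ t : X × X × Y, K t.1 t.2.2 / K t.2.1 t.2.2 := by
  classical
  obtain ⟨y0⟩ := ‹Nonempty Y›
  obtain ⟨xx⟩ := ‹Nonempty X›
  set M := ⨆ t : X × X × Y, K t.1 t.2.2 / K t.2.1 t.2.2 with hMdef
  have hMb : ∀ x x' y, K x y / K x' y ≤ M := by
    intro x x' y
    exact le_ciSup (f := fun t : X × X × Y => K t.1 t.2.2 / K t.2.1 t.2.2)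
      (Set.finite_range _).bddAbove ⟨x, x', y⟩
  have hM1 : (1:ℝ) ≤ M := by
    have := hMb xx xx y0
    rwa [div_self (ne_of_gt (hKpos xx y0))] at this
  have hMpos : (0:ℝ) < M := lt_of_lt_of_le one_pos hM1
  have hKM : ∀ x x' y, K x y ≤ M * K x' y := by
    intro x x' y
    have := (div_le_iff₀ (hKpos x' y)).1 (hMb x x' y)
    linarith
  clear_value M
  -- the inner-set upper bound
  have hinner : ∀ (PX : X → ℝ), (∀ x, 0 < PX x) → (∑ x, PX x = 1) → ∀ (y : Y)
      (n : ℕ) (Q : X → Fin n → ℝ), (∀ x u, 0 ≤ Q x u) → (∀ x, ∑ u, Q x u = 1) →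
      guesswork (fun u => ∑ x, Q x u * PX x) /
        guesswork (fun u => ∑ x, Q x u * (PX x * K x y / ∑ x', PX x' * K x' y)) ≤ M := by
    intro PX hp hs y n Q hQ0 hQ1
    have hZpos : (0:ℝ) < ∑ x', PX x' * K x' y :=
      Finset.sum_pos (fun x _ => mul_pos (hp x) (hKpos x y)) Finset.univ_nonempty
    set Z := ∑ x', PX x' * K x' y with hZ
    set den := fun u : Fin n => ∑ x, Q x u * (PX x * K x y / Z) with hden
    have hden0 : ∀ u, 0 ≤ den u := fun u =>
      Finset.sum_nonneg fun x _ => mul_nonneg (hQ0 x u)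
        (div_nonneg (mul_nonneg (hp x).le (hKpos x y).le) hZpos.le)
    have hden1 : ∑ u, den u = 1 := by
      rw [hden]
      rw [Finset.sum_comm]
      have : ∀ x : X, ∑ u, Q x u * (PX x * K x y / Z) = PX x * K x y / Z := by
        intro x
        rw [← Finset.sum_mul, hQ1 x, one_mul]
      rw [Finset.sum_congr rfl fun x _ => this x, ← Finset.sum_div, ← hZ, div_self hZpos.ne']
    have hd1 : (1:ℝ) ≤ guesswork den := one_le_guesswork den hden0 hden1
    have hnum_le : guesswork (fun u => ∑ x, Q x u * PX x) ≤ M * guesswork den := by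
      apply guesswork_le_mul _ _ M hMpos
      intro u
      rw [hden, Finset.mul_sum]
      apply Finset.sum_le_sum
      intro x _
      have hZle : Z ≤ M * K x y := by
        rw [hZ]
        calc ∑ x', PX x' * K x' y ≤ ∑ x', PX x' * (M * K x y) :=
              Finset.sum_le_sum fun x' _ =>
                mul_le_mul_of_nonneg_left (hKM x' x y) (hp x').le
          _ = M * K x y := by rw [← Finset.sum_mul, hs, one_mul]
      have hx : PX x ≤ M * (PX x * K x y / Z) := by
        rw [mul_div_assoc', le_div_iff₀ hZpos]
        calc PX x * Z ≤ PX x * (M * K x y) := mul_le_mul_of_nonneg_left hZle (hp x).le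
          _ = M * (PX x * K x y) := by ring
      calc Q x u * PX x ≤ Q x u * (M * (PX x * K x y / Z)) :=
            mul_le_mul_of_nonneg_left hx (hQ0 x u)
        _ = M * (Q x u * (PX x * K x y / Z)) := by ring
    rw [div_le_iff₀ (lt_of_lt_of_le one_pos hd1)]
    exact hnum_le
  set S := {L : ℝ | ∃ PX : X → ℝ, (∀ x, 0 < PX x) ∧ (∑ x, PX x = 1) ∧
      ∃ y : Y, L = sSup {r : ℝ | ∃ (n : ℕ) (Q : X → Fin n → ℝ),
        (∀ x u, 0 ≤ Q x u) ∧ (∀ x, ∑ u, Q x u = 1) ∧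
        r = guesswork (fun u => ∑ x, Q x u * PX x) /
            guesswork (fun u =>
              ∑ x, Q x u * (PX x * K x y / ∑ x', PX x' * K x' y))}} with hSdef
  have hM0 : (0:ℝ) ≤ M := le_trans zero_le_one hM1
  have hSub : ∀ L ∈ S, L ≤ M := by
    rintro L ⟨PX, hp, hs, y, rfl⟩
    exact Real.sSup_le (by rintro r ⟨n, Q, h0, h1, rfl⟩; exact hinner PX hp hs y n Q h0 h1) hM0
  have hSbdd : BddAbove S := ⟨M, hSub⟩
  have helem : ∀ (PX : X → ℝ), (∀ x, 0 < PX x) → (∑ x, PX x = 1) → ∀ (y : Y)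
      (n : ℕ) (Q : X → Fin n → ℝ), (∀ x u, 0 ≤ Q x u) → (∀ x, ∑ u, Q x u = 1) →
      guesswork (fun u => ∑ x, Q x u * PX x) /
        guesswork (fun u => ∑ x, Q x u * (PX x * K x y / ∑ x', PX x' * K x' y)) ≤ sSup S := by
    intro PX hp hs y n Q hQ0 hQ1
    have hmem : sSup {r : ℝ | ∃ (n : ℕ) (Q : X → Fin n → ℝ),
        (∀ x u, 0 ≤ Q x u) ∧ (∀ x, ∑ u, Q x u = 1) ∧
        r = guesswork (fun u => ∑ x, Q x u * PX x) /
            guesswork (fun u =>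
              ∑ x, Q x u * (PX x * K x y / ∑ x', PX x' * K x' y))} ∈ S :=
      ⟨PX, hp, hs, y, rfl⟩
    have hbdd : BddAbove {r : ℝ | ∃ (n : ℕ) (Q : X → Fin n → ℝ),
        (∀ x u, 0 ≤ Q x u) ∧ (∀ x, ∑ u, Q x u = 1) ∧
        r = guesswork (fun u => ∑ x, Q x u * PX x) /
            guesswork (fun u =>
              ∑ x, Q x u * (PX x * K x y / ∑ x', PX x' * K x' y))} := by
      refine ⟨M, ?_⟩
      rintro r ⟨n', Q', h0', h1', rfl⟩
      exact hinner PX hp hs y n' Q' h0' h1'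
    have hrmem : guesswork (fun u => ∑ x, Q x u * PX x) /
        guesswork (fun u => ∑ x, Q x u * (PX x * K x y / ∑ x', PX x' * K x' y))
        ∈ {r : ℝ | ∃ (n : ℕ) (Q : X → Fin n → ℝ),
        (∀ x u, 0 ≤ Q x u) ∧ (∀ x, ∑ u, Q x u = 1) ∧
        r = guesswork (fun u => ∑ x, Q x u * PX x) /
            guesswork (fun u =>
              ∑ x, Q x u * (PX x * K x y / ∑ x', PX x' * K x' y))} :=
      ⟨n, Q, hQ0, hQ1, rfl⟩
    exact le_trans (le_csSup hbdd hrmem) (le_csSup hSbdd hmem)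
  refine le_antisymm (Real.sSup_le hSub hM0) (le_of_forall_lt ?_)
  intro b hb
  have hcardX : (0:ℝ) < (Fintype.card X : ℝ) := by
    exact_mod_cast Fintype.card_pos
  rcases lt_or_ge b 1 with hb1 | hb1
  · -- trivial element of value 1
    set PX : X → ℝ := fun _ => (Fintype.card X : ℝ)⁻¹ with hPX
    have hp : ∀ x, 0 < PX x := fun x => inv_pos.2 hcardX
    have hs : ∑ x, PX x = 1 := by
      rw [hPX]
      rw [Finset.sum_const, Finset.card_univ, nsmul_eq_mul]
      field_simp
    have hQ0 : ∀ (x : X) (u : Fin 1), (0:ℝ) ≤ (1:ℝ) := fun _ _ => zero_le_one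
    have hQ1 : ∀ x : X, ∑ _u : Fin 1, (1:ℝ) = 1 := fun _ => by simp
    have h := helem PX hp hs y0 1 (fun _ _ => (1:ℝ)) (fun x u => zero_le_one) (fun _ => by simp)
    have hZpos : (0:ℝ) < ∑ x', PX x' * K x' y0 :=
      Finset.sum_pos (fun x _ => mul_pos (hp x) (hKpos x y0)) Finset.univ_nonempty
    have e1 : guesswork (fun _u : Fin 1 => ∑ x, (1:ℝ) * PX x) = 1 := by
      rw [guesswork_fin_one]
      simp only [one_mul]
      exact hs
    have e2 : guesswork (fun _u : Fin 1 =>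
        ∑ x, (1:ℝ) * (PX x * K x y0 / ∑ x', PX x' * K x' y0)) = 1 := by
      rw [guesswork_fin_one]
      simp only [one_mul]
      rw [← Finset.sum_div, div_self hZpos.ne']
    rw [e1, e2] at h
    norm_num at h
    exact lt_of_lt_of_le hb1 h
  · -- main construction
    obtain ⟨⟨x1, x0, y⟩, ht⟩ :=
      Finite.exists_max (fun t : X × X × Y => K t.1 t.2.2 / K t.2.1 t.2.2)
    have hMt : M = K x1 y / K x0 y := by
      refine le_antisymm ?_ (hMb x1 x0 y)
      rw [hMdef]
      exact ciSup_le ht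
    have hbM : b < M := hb
    have hM1' : (1:ℝ) < M := lt_of_le_of_lt hb1 hb
    have hc0 : 0 < K x0 y := hKpos x0 y
    have hc1 : 0 < K x1 y := hKpos x1 y
    have hc01 : K x1 y = M * K x0 y := by
      rw [hMt]; field_simp
    have hx01 : x1 ≠ x0 := by
      rintro rfl
      rw [hMt, div_self hc0.ne'] at hM1'
      exact lt_irrefl _ hM1'
    set b' := (b + M) / 2 with hb'def
    have hb'1 : (1:ℝ) ≤ b' := by rw [hb'def]; linarith
    have hbb' : b < b' := by rw [hb'def]; linarith
    have hb'M : b' < M := by rw [hb'def]; linarith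
    clear_value b'
    set k := ((Finset.univ.erase x1).card : ℝ) with hkdef
    have hk1 : (1:ℝ) ≤ k := by
      have hx0mem : x0 ∈ Finset.univ.erase x1 :=
        Finset.mem_erase.2 ⟨fun h => hx01 h.symm, Finset.mem_univ _⟩
      have : 0 < (Finset.univ.erase x1).card := Finset.card_pos.2 ⟨x0, hx0mem⟩
      rw [hkdef]
      exact_mod_cast this
    have hkpos : (0:ℝ) < k := lt_of_lt_of_le one_pos hk1
    set δ := (M - b') / (M * k) with hδdef
    have hδpos : 0 < δ := div_pos (by linarith) (mul_pos hMpos hkpos)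
    have hkδ : k * δ = (M - b') / M := by
      rw [hδdef]; field_simp
    have hkδ1 : k * δ < 1 := by
      rw [hkδ, div_lt_one hMpos]; linarith
    have h1kδ : 1 - k * δ = b' / M := by
      rw [hkδ]; field_simp; ring
    have hδ1 : δ < 1 := by
      have hδk : δ ≤ k * δ := le_mul_of_one_le_left hδpos.le hk1
      linarith
    clear_value δ
    set PX : X → ℝ := fun x => if x = x1 then 1 - k * δ else δ with hPXdef
    have hPX1 : PX x1 = 1 - k * δ := by
      show (if x1 = x1 then 1 - k * δ else δ) = 1 - k * δ
      rw [if_pos rfl]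
    have hPXx0 : PX x0 = δ := by
      show (if x0 = x1 then 1 - k * δ else δ) = δ
      rw [if_neg (fun h => hx01 h.symm)]
    have hp : ∀ x, 0 < PX x := by
      intro x
      show 0 < if x = x1 then 1 - k * δ else δ
      split
      · linarith
      · exact hδpos
    have hs : ∑ x, PX x = 1 := by
      rw [← Finset.add_sum_erase _ _ (Finset.mem_univ x1), hPX1]
      have herase : ∑ x ∈ Finset.univ.erase x1, PX x = k * δ := by
        have hterm : ∀ x ∈ Finset.univ.erase x1, PX x = δ := by
          intro x hx
          show (if x = x1 then 1 - k * δ else δ) = δ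
          rw [if_neg (Finset.mem_erase.1 hx).1]
        rw [Finset.sum_congr rfl hterm, Finset.sum_const, nsmul_eq_mul, hkdef]
      rw [herase]; ring
    clear_value PX
    set Z := ∑ x', PX x' * K x' y with hZdef
    have hZpos : 0 < Z :=
      Finset.sum_pos (fun x _ => mul_pos (hp x) (hKpos x y)) Finset.univ_nonempty
    have hZge : b' * K x0 y ≤ Z := by
      have h1 : PX x1 * K x1 y ≤ Z := by
        rw [hZdef]
        exact Finset.single_le_sum
          (fun x _ => (mul_pos (hp x) (hKpos x y)).le) (Finset.mem_univ x1)
      have h2 : PX x1 * K x1 y = b' * K x0 y := by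
        rw [hPX1, h1kδ, hc01]
        field_simp
      linarith
    set q0 := PX x0 * K x0 y / Z with hq0def
    have hq0pos : 0 < q0 := div_pos (mul_pos (hp x0) hc0) hZpos
    have hq0le1 : q0 ≤ 1 := by
      rw [hq0def, div_le_one hZpos, hPXx0]
      have h4 : δ * K x0 y ≤ b' * K x0 y :=
        mul_le_mul_of_nonneg_right (by linarith) hc0.le
      linarith
    have hpq : b' * q0 ≤ δ := by
      rw [hq0def, hPXx0]
      rw [show b' * (δ * K x0 y / Z) = b' * K x0 y * δ / Z by ring]
      rw [div_le_iff₀ hZpos]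
      calc b' * K x0 y * δ ≤ Z * δ := mul_le_mul_of_nonneg_right hZge hδpos.le
        _ = δ * Z := by ring
    have hgap : 0 < δ - b * q0 := by
      have : b * q0 < b' * q0 := mul_lt_mul_of_pos_right hbb' hq0pos
      linarith
    clear_value q0 Z
    obtain ⟨n0, hn0⟩ := exists_nat_gt (2 * b / (δ - b * q0))
    set n := n0 + 1 with hndef
    have hn : 0 < n := Nat.succ_pos _
    have hQ0 : ∀ (x : X) (u : Fin n),
        (0:ℝ) ≤ (if x = x0 then (1/(n:ℝ)) else if u.val = 0 then 1 else 0) := by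
      intro x u
      split
      · positivity
      · split <;> norm_num
    have hQ1 : ∀ x : X,
        ∑ u : Fin n, (if x = x0 then (1/(n:ℝ)) else if u.val = 0 then 1 else 0) = 1 := by
      intro x
      by_cases hx : x = x0
      · have hterm : ∀ u : Fin n,
            (if x = x0 then (1/(n:ℝ)) else if u.val = 0 then 1 else 0) = 1/(n:ℝ) :=
          fun u => if_pos hx
        rw [Finset.sum_congr rfl fun u _ => hterm u, Finset.sum_const,
          Finset.card_univ, Fintype.card_fin, nsmul_eq_mul]
        have : ((n:ℝ)) ≠ 0 := Nat.cast_ne_zero.2 hn.ne'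
        field_simp
      · simp only [if_neg hx]
        simp only [fin_val_eq_zero_iff hn]
        rw [Finset.sum_ite_eq' Finset.univ (⟨0, hn⟩ : Fin n)]
        simp
    have h := helem PX hp hs y n
      (fun x u => if x = x0 then (1/(n:ℝ)) else if u.val = 0 then 1 else 0) hQ0 hQ1
    rw [← hZdef] at h
    have hnum : (fun u : Fin n =>
        ∑ x, (if x = x0 then (1/(n:ℝ)) else if u.val = 0 then 1 else 0) * PX x)
        = distD n δ := by
      funext u
      rw [sum_Q_eq x0 n PX hs u, hPXx0]
    have hW : ∑ x, PX x * K x y / Z = 1 := by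
      rw [← Finset.sum_div, ← hZdef, div_self hZpos.ne']
    have hden : (fun u : Fin n =>
        ∑ x, (if x = x0 then (1/(n:ℝ)) else if u.val = 0 then 1 else 0)
          * (PX x * K x y / Z)) = distD n q0 := by
      funext u
      rw [hq0def]
      exact sum_Q_eq x0 n (fun x => PX x * K x y / Z) hW u
    rw [hnum, hden] at h
    have hA : δ * ((n:ℝ) + 1) / 2 ≤ guesswork (distD n δ) :=
      guesswork_distD_ge hn hδpos.le hδ1.le
    have hB : guesswork (distD n q0) ≤ q0 * ((n:ℝ) + 1) / 2 + 1 :=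
      guesswork_distD_le hn hq0pos.le
    have hd1 : (1:ℝ) ≤ guesswork (distD n q0) :=
      one_le_guesswork _ (distD_nonneg hq0pos.le hq0le1) (distD_sum hn q0)
    have hApos : (0:ℝ) ≤ δ * ((n:ℝ) + 1) / 2 := by positivity
    have hdiv : (δ * ((n:ℝ) + 1) / 2) / (q0 * ((n:ℝ) + 1) / 2 + 1)
        ≤ guesswork (distD n δ) / guesswork (distD n q0) :=
      div_le_div₀ (le_trans hApos hA) hA (lt_of_lt_of_le one_pos hd1) hB
    have hnn : ((n:ℝ)) = (n0:ℝ) + 1 := by rw [hndef]; push_cast; ring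
    have hn0' : 2 * b < (δ - b * q0) * (n0:ℝ) := by
      rw [div_lt_iff₀ hgap] at hn0
      calc 2 * b < (n0:ℝ) * (δ - b * q0) := hn0
        _ = (δ - b * q0) * (n0:ℝ) := by ring
    have hAB : b < (δ * ((n:ℝ) + 1) / 2) / (q0 * ((n:ℝ) + 1) / 2 + 1) := by
      rw [hnn]
      exact ratio_aux b δ q0 (n0:ℝ) hgap hq0pos (Nat.cast_nonneg n0) hn0' 
    exact lt_of_lt_of_le (lt_of_lt_of_le hAB hdiv) h
end

section
/- Fix a probability mass function P on a finite set 𝒰. Then the infimum, over all pairs of nonnegative functions Ã, B̃ : 𝒰 → [0, ∞) with Ã(u) + B̃(u) = 2P(u) for every u ∈ 𝒰, of (1/2)γ̄(Ã) + (1/2)γ̄(B̃) equals the infimum of the same quantity restricted to pairs Ã, B̃ with disjoint supports (i.e., for every u ∈ 𝒰, Ã(u) = 0 or B̃(u) = 0). -/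
open Finset

/-! Fix orderings `G`, `H` attaining `γ̄(A)` and `γ̄(B)`. The cost `∑ (G u + 1) A u + ∑ (H u + 1) B u`
is linear in the pair `(A, B)`, so moving the whole mass `A u + B u` at each `u` to the side with
the smaller rank does not increase it; and the guesswork of the new, disjointly supported pair is
at most its cost under the same orderings `G`, `H`. -/

noncomputable def extGuesswork {U : Type*} [Fintype U] (A : U → ℝ) : ℝ :=
  ⨅ G : U ≃ Fin (Fintype.card U), ∑ u, ((G u).val + 1 : ℝ) * A u

section

variable {U : Type*} [Fintype U]

theorem extGuesswork_le_sum (A : U → ℝ) (G : U ≃ Fin (Fintype.card U)) :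
    extGuesswork A ≤ ∑ u, ((G u).val + 1 : ℝ) * A u :=
  ciInf_le (Set.finite_range _).bddBelow G

theorem exists_extGuesswork_eq_sum (A : U → ℝ) :
    ∃ G : U ≃ Fin (Fintype.card U), extGuesswork A = ∑ u, ((G u).val + 1 : ℝ) * A u := by
  have : Nonempty (U ≃ Fin (Fintype.card U)) := ⟨Fintype.equivFin U⟩
  obtain ⟨G, hG⟩ := exists_eq_ciInf_of_finite
    (f := fun G : U ≃ Fin (Fintype.card U) => ∑ u, ((G u).val + 1 : ℝ) * A u)
  exact ⟨G, hG.symm⟩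

theorem sum_mul_add_sum_mul_le_of_concentrate_on_min (g h A B : U → ℝ)
    (hA : ∀ u, 0 ≤ A u) (hB : ∀ u, 0 ≤ B u) :
    ∑ u, g u * (if g u ≤ h u then A u + B u else 0) +
        ∑ u, h u * (if g u ≤ h u then 0 else A u + B u) ≤
      ∑ u, g u * A u + ∑ u, h u * B u := by
  simp only [← sum_add_distrib]
  refine sum_le_sum fun u _ => ?_
  split_ifs with hgh
  · nlinarith [hB u]
  · nlinarith [hA u]

theorem exists_disjoint_extGuesswork_add_le (A B : U → ℝ)
    (hA : ∀ u, 0 ≤ A u) (hB : ∀ u, 0 ≤ B u) :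
    ∃ A' B' : U → ℝ, (∀ u, 0 ≤ A' u) ∧ (∀ u, 0 ≤ B' u) ∧ (∀ u, A' u = 0 ∨ B' u = 0) ∧
      (∀ u, A' u + B' u = A u + B u) ∧
      extGuesswork A' + extGuesswork B' ≤ extGuesswork A + extGuesswork B := by
  obtain ⟨G, hG⟩ := exists_extGuesswork_eq_sum A
  obtain ⟨H, hH⟩ := exists_extGuesswork_eq_sum B
  set g : U → ℝ := fun u => (G u).val + 1
  set h : U → ℝ := fun u => (H u).val + 1
  refine ⟨fun u => if g u ≤ h u then A u + B u else 0,
    fun u => if g u ≤ h u then 0 else A u + B u, fun u => ?_, fun u => ?_, fun u => ?_,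
    fun u => ?_, ?_⟩
  all_goals beta_reduce
  · split_ifs <;> linarith [hA u, hB u]
  · split_ifs <;> linarith [hA u, hB u]
  · split_ifs <;> simp
  · split_ifs <;> ring
  · calc _ ≤ ∑ u, g u * (if g u ≤ h u then A u + B u else 0) +
            ∑ u, h u * (if g u ≤ h u then 0 else A u + B u) :=
          add_le_add (extGuesswork_le_sum _ G) (extGuesswork_le_sum _ H)
      _ ≤ ∑ u, g u * A u + ∑ u, h u * B u :=
          sum_mul_add_sum_mul_le_of_concentrate_on_min g h A B hA hB
      _ = extGuesswork A + extGuesswork B := by rw [hG, hH]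

end

theorem splitting_infimum_attained_on_disjoint_supports_general
    {U : Type*} [Fintype U]
    (P : U → ℝ) :
    sInf {r : ℝ | ∃ A B : U → ℝ,
        (∀ u, 0 ≤ A u) ∧ (∀ u, 0 ≤ B u) ∧
        (∀ u, A u + B u = 2 * P u) ∧
        r = (1 / 2) * extGuesswork A + (1 / 2) * extGuesswork B} =
    sInf {r : ℝ | ∃ A B : U → ℝ,
        (∀ u, 0 ≤ A u) ∧ (∀ u, 0 ≤ B u) ∧
        (∀ u, A u = 0 ∨ B u = 0) ∧
        (∀ u, A u + B u = 2 * P u) ∧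
        r = (1 / 2) * extGuesswork A + (1 / 2) * extGuesswork B} := by
  refine csInf_eq_csInf_of_forall_exists_le ?_ ?_
  · rintro _ ⟨A, B, hA, hB, hAB, rfl⟩
    obtain ⟨A', B', hA', hB', hdisj, hsum, hle⟩ := exists_disjoint_extGuesswork_add_le A B hA hB
    exact ⟨_, ⟨A', B', hA', hB', hdisj, fun u => (hsum u).trans (hAB u), rfl⟩, by linarith⟩
  · rintro _ ⟨A, B, hA, hB, -, hAB, rfl⟩
    exact ⟨_, ⟨A, B, hA, hB, hAB, rfl⟩, le_rfl⟩

/-- **Reduction to disjoint supports.**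
Fix a pmf `P` on a finite set `𝒰`.  The infimum, over all pairs of nonnegative
functions `Ã, B̃ : 𝒰 → [0,∞)` with `Ã(u) + B̃(u) = 2P(u)` for every `u`, of
`(1/2)γ̄(Ã) + (1/2)γ̄(B̃)` equals the infimum of the same quantity restricted to
pairs with disjoint supports (for every `u`, `Ã(u) = 0` or `B̃(u) = 0`). -/
theorem splitting_infimum_attained_on_disjoint_supports
    {U : Type*} [Fintype U]
    (P : U → ℝ)
    (hnn : ∀ u, 0 ≤ P u)
    (hsum : ∑ u, P u = 1) :
    sInf {r : ℝ | ∃ A B : U → ℝ,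
        (∀ u, 0 ≤ A u) ∧ (∀ u, 0 ≤ B u) ∧
        (∀ u, A u + B u = 2 * P u) ∧
        r = (1 / 2) * extGuesswork A + (1 / 2) * extGuesswork B} =
    sInf {r : ℝ | ∃ A B : U → ℝ,
        (∀ u, 0 ≤ A u) ∧ (∀ u, 0 ≤ B u) ∧
        (∀ u, A u = 0 ∨ B u = 0) ∧
        (∀ u, A u + B u = 2 * P u) ∧
        r = (1 / 2) * extGuesswork A + (1 / 2) * extGuesswork B} :=
  splitting_infimum_attained_on_disjoint_supports_general P
end

section
/- Let P_{XY} be a joint probability mass function on a finite set 𝒳 × 𝒴 and assume that c := ∑_{y ∈ 𝒴} min_{x : P_X(x) > 0} P_{Y|X}(y|x) > 0. Then for every finite set 𝒰 and every channel P_{U|X}, the ratio γ(P_U) / [∑_{y : P_Y(y) > 0} P_Y(y) γ(P_{U|Y}(·|y))] is at most 1/c; i.e., the maximal guesswork leakage from X to Y is at most −log ∑_{y ∈ 𝒴} min_{x : P_X(x) > 0} P_{Y|X}(y|x). -/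
/-!
Put `c_y = min_{x : P_X(x) > 0} P_{XY}(x,y) / P_X(x)`, so that `c_y P_X(x) ≤ P_{XY}(x,y)` for every
`x`. Pushing this through the channel gives `c_y P_U ≤ P_Y(y) P_{U|Y}(·|y)` pointwise, and since
the guesswork is monotone and positively homogeneous, `c_y γ(P_U) ≤ P_Y(y) γ(P_{U|Y}(·|y))`.
Summing over `y` yields `c γ(P_U) ≤ ∑_y P_Y(y) γ(P_{U|Y}(·|y))`.
-/

open Finset

section Guesswork

variable {U : Type*} [Fintype U]

theorem guesswork_le_sum (P : U → ℝ) (G : U ≃ Fin (Fintype.card U)) :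
    guesswork P ≤ ∑ u, ((G u).val + 1 : ℝ) * P u :=
  ciInf_le (Set.finite_range _).bddBelow G

theorem guesswork_mono {P Q : U → ℝ} (h : ∀ u, P u ≤ Q u) : guesswork P ≤ guesswork Q :=
  have : Nonempty (U ≃ Fin (Fintype.card U)) := ⟨Fintype.equivFin U⟩
  le_ciInf fun G => (guesswork_le_sum P G).trans <|
    sum_le_sum fun u _ => mul_le_mul_of_nonneg_left (h u) (by positivity)

theorem guesswork_const_mul {a : ℝ} (ha : 0 ≤ a) (P : U → ℝ) :
    guesswork (fun u => a * P u) = a * guesswork P := by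
  simp only [guesswork, Real.mul_iInf_of_nonneg ha, mul_sum, mul_left_comm a]

theorem guesswork_zero : guesswork (fun _ : U => (0 : ℝ)) = 0 := by
  simpa using guesswork_const_mul le_rfl (fun _ : U => (0 : ℝ))

theorem guesswork_nonneg {P : U → ℝ} (h : ∀ u, 0 ≤ P u) : 0 ≤ guesswork P :=
  guesswork_zero.symm.le.trans (guesswork_mono h)

theorem mul_guesswork_div {a : ℝ} (ha : 0 < a) (P : U → ℝ) :
    a * guesswork (fun u => P u / a) = guesswork P := by
  rw [← guesswork_const_mul ha.le]
  simp only [mul_div_cancel₀ _ ha.ne']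

end Guesswork

theorem sInf_div_mul_le {X : Type*} {f g : X → ℝ} (hf : ∀ x, 0 ≤ f x) (hfg : ∀ x, f x ≤ g x)
    (x : X) : sInf {r : ℝ | ∃ x, 0 < g x ∧ r = f x / g x} * g x ≤ f x := by
  rcases (hf x).trans (hfg x) |>.eq_or_lt with hgx | hgx
  · rw [← hgx, mul_zero]
    exact hf x
  · have hbdd : BddBelow {r : ℝ | ∃ x, 0 < g x ∧ r = f x / g x} :=
      ⟨0, by rintro _ ⟨x', hx', rfl⟩; exact div_nonneg (hf x') hx'.le⟩
    calc sInf {r : ℝ | ∃ x, 0 < g x ∧ r = f x / g x} * g x ≤ f x / g x * g x :=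
          mul_le_mul_of_nonneg_right (csInf_le hbdd ⟨x, hgx, rfl⟩) hgx.le
      _ = f x := div_mul_cancel₀ _ hgx.ne'

theorem sInf_div_mul_guesswork_le {X U : Type*} [Fintype X] [Fintype U] {f g : X → ℝ}
    (hf : ∀ x, 0 ≤ f x) (hfg : ∀ x, f x ≤ g x) {K : X → U → ℝ} (hK : ∀ x u, 0 ≤ K x u) :
    sInf {r : ℝ | ∃ x, 0 < g x ∧ r = f x / g x} * guesswork (fun u => ∑ x, K x u * g x) ≤
      guesswork (fun u => ∑ x, K x u * f x) := by
  have hc : 0 ≤ sInf {r : ℝ | ∃ x, 0 < g x ∧ r = f x / g x} :=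
    Real.sInf_nonneg fun _ ⟨x, hx, hr⟩ => hr ▸ div_nonneg (hf x) hx.le
  rw [← guesswork_const_mul hc]
  refine guesswork_mono fun u => ?_
  rw [mul_sum]
  refine sum_le_sum fun x _ => ?_
  rw [mul_left_comm]
  exact mul_le_mul_of_nonneg_left (sInf_div_mul_le hf hfg x) (hK x u)

theorem maximal_guesswork_leakage_upper_bound_general
    {X Y : Type*} [Fintype X] [Fintype Y]
    (PXY : X → Y → ℝ)
    (hnn : ∀ x y, 0 ≤ PXY x y)
    (c : ℝ)
    (hc_def : c = ∑ y, sInf {r : ℝ | ∃ x, 0 < (∑ y', PXY x y') ∧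
        r = PXY x y / ∑ y', PXY x y'})
    (hc : 0 < c) :
    ∀ (n : ℕ) (K : X → Fin n → ℝ),
      (∀ x u, 0 ≤ K x u) → (∀ x, ∑ u, K x u = 1) →
      guesswork (fun u => ∑ x, K x u * (∑ y', PXY x y')) /
          (∑ y ∈ univ.filter (fun y => 0 < ∑ x, PXY x y),
            (∑ x, PXY x y) *
              guesswork (fun u => ∑ x, K x u * (PXY x y / ∑ x', PXY x' y)))
        ≤ 1 / c := by
  intro n K hK _
  have hconditional : ∀ y, 0 < ∑ x, PXY x y →
      (∑ x, PXY x y) * guesswork (fun u => ∑ x, K x u * (PXY x y / ∑ x', PXY x' y)) =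
        guesswork (fun u => ∑ x, K x u * PXY x y) := fun y hy => by
    simp only [← mul_div_assoc, ← sum_div]
    exact mul_guesswork_div hy _
  have hnull : ∀ y, ¬ 0 < ∑ x, PXY x y → guesswork (fun u => ∑ x, K x u * PXY x y) = 0 :=
    fun y hy => by
      have hzero := (sum_eq_zero_iff_of_nonneg fun x _ => hnn x y).1
        (le_antisymm (not_lt.1 hy) (sum_nonneg fun x _ => hnn x y))
      simpa [hzero] using guesswork_zero
  rw [sum_congr rfl fun y hy => hconditional y (mem_filter.1 hy).2,
    sum_filter_of_ne fun y _ h => not_not.1 (mt (hnull y) h)]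
  have hkey : c * guesswork (fun u => ∑ x, K x u * ∑ y', PXY x y') ≤
      ∑ y, guesswork (fun u => ∑ x, K x u * PXY x y) := by
    rw [hc_def, sum_mul]
    exact sum_le_sum fun y _ => sInf_div_mul_guesswork_le (fun x => hnn x y)
      (fun x => single_le_sum (fun y' _ => hnn x y') (mem_univ y)) hK
  have hγ : 0 ≤ guesswork (fun u => ∑ x, K x u * ∑ y', PXY x y') :=
    guesswork_nonneg fun u =>
      sum_nonneg fun x _ => mul_nonneg (hK x u) (sum_nonneg fun y _ => hnn x y)
  rcases (mul_nonneg hc.le hγ).trans hkey |>.eq_or_lt with hD | hD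
  · rw [← hD, div_zero]
    positivity
  · rw [div_le_div_iff₀ hD hc, one_mul, mul_comm]
    exact hkey

/-- **Upper bound on maximal guesswork leakage.**
Let `P_{XY}` be a joint pmf on a finite set `𝒳 × 𝒴` and suppose
`c = ∑_y min_{x : P_X(x)>0} P_{Y|X}(y|x) > 0`.  Then for every finite set `𝒰`
(wlog `Fin n`) and every channel `P_{U|X}`,
`γ(P_U) / ∑_{y : P_Y(y)>0} P_Y(y) γ(P_{U|Y}(·|y)) ≤ 1/c`;
equivalently, the maximal guesswork leakage from `X` to `Y` is at most
`−log ∑_y min_{x : P_X(x)>0} P_{Y|X}(y|x)`. -/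
theorem maximal_guesswork_leakage_upper_bound
    {X Y : Type*} [Fintype X] [Fintype Y]
    (PXY : X → Y → ℝ)
    (hnn : ∀ x y, 0 ≤ PXY x y)
    (hsum : ∑ x, ∑ y, PXY x y = 1)
    (c : ℝ)
    (hc_def : c = ∑ y, sInf {r : ℝ | ∃ x, 0 < (∑ y', PXY x y') ∧
        r = PXY x y / ∑ y', PXY x y'})
    (hc : 0 < c) :
    ∀ (n : ℕ) (K : X → Fin n → ℝ),
      (∀ x u, 0 ≤ K x u) → (∀ x, ∑ u, K x u = 1) →
      guesswork (fun u => ∑ x, K x u * (∑ y', PXY x y')) /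
          (∑ y ∈ univ.filter (fun y => 0 < ∑ x, PXY x y),
            (∑ x, PXY x y) *
              guesswork (fun u => ∑ x, K x u * (PXY x y / ∑ x', PXY x' y)))
        ≤ 1 / c :=
  maximal_guesswork_leakage_upper_bound_general PXY hnn c hc_def hc
end

section
/- Let P_{XY} be a joint probability mass function on a finite set 𝒳 × 𝒴, let y ∈ 𝒴 satisfy P_Y(y) > 0, assume P_{X|Y}(x|y) > 0 for every x ∈ 𝒳 with P_X(x) > 0, and let h : ℕ → [0, ∞) be any function. Then for every finite set 𝒰 and every channel P_{U|X}, [min over guessing functions G of ∑_{u ∈ 𝒰} h(G(u)) P_U(u)] ≤ (max_{x : P_X(x) > 0} P_X(x)/P_{X|Y}(x|y)) · [min over guessing functions G of ∑_{u ∈ 𝒰} h(G(u)) P_{U|Y}(u|y)]. -/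
/-! Since `P_{U}` and `P_{U|Y}(·|y)` are the images of `P_X` and `P_{X|Y}(·|y)` under the same
channel, the pointwise bound `P_X ≤ C · P_{X|Y}(·|y)`, with `C` the maximal likelihood ratio,
passes to `P_U ≤ C · P_{U|Y}(·|y)`. The `h`-guesswork is monotone and positively homogeneous in
the pmf when `h ≥ 0`, which gives the bound. -/

open Finset

/-- The `h`-guesswork of a pmf `P` on a finite set `U`: the minimum over all
guessing functions (bijections `G : U → {1,…,n}`) of `∑ u, h(G(u)) · P(u)`. -/
noncomputable def hGuesswork {U : Type*} [Fintype U] (h : ℕ → ℝ) (P : U → ℝ) : ℝ :=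
  ⨅ G : U ≃ Fin (Fintype.card U), ∑ u, h ((G u).val + 1) * P u

section hGuesswork

variable {U : Type*} [Fintype U] {h : ℕ → ℝ}

theorem hGuesswork_mono (hh : ∀ n, 0 ≤ h n) {P Q : U → ℝ} (hPQ : ∀ u, P u ≤ Q u) :
    hGuesswork h P ≤ hGuesswork h Q := by
  have : Nonempty (U ≃ Fin (Fintype.card U)) := ⟨Fintype.equivFin U⟩
  exact ciInf_mono (Set.finite_range _).bddBelow fun G =>
    sum_le_sum fun u _ => mul_le_mul_of_nonneg_left (hPQ u) (hh _)

theorem hGuesswork_const_mul {c : ℝ} (hc : 0 ≤ c) (P : U → ℝ) :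
    hGuesswork h (fun u => c * P u) = c * hGuesswork h P := by
  simp only [hGuesswork, Real.mul_iInf_of_nonneg hc, mul_sum, mul_left_comm]

theorem hGuesswork_le_mul_of_le (hh : ∀ n, 0 ≤ h n) {c : ℝ} (hc : 0 ≤ c) {P Q : U → ℝ}
    (hPQ : ∀ u, P u ≤ c * Q u) : hGuesswork h P ≤ c * hGuesswork h Q :=
  (hGuesswork_mono hh hPQ).trans_eq (hGuesswork_const_mul hc Q)

end hGuesswork

theorem iSup_div_nonneg {ι : Type*} {p q : ι → ℝ} (hq : ∀ i, 0 ≤ q i) :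
    0 ≤ ⨆ i : {i // 0 < p i}, p i / q i :=
  Real.iSup_nonneg fun i => div_nonneg i.2.le (hq i)

theorem le_iSup_div_mul {ι : Type*} [Finite ι] {p q : ι → ℝ} (hq : ∀ i, 0 ≤ q i)
    (hpq : ∀ i, 0 < p i → 0 < q i) (i : ι) :
    p i ≤ (⨆ j : {j // 0 < p j}, p j / q j) * q i := by
  by_cases hpi : 0 < p i
  · calc p i = p i / q i * q i := (div_mul_cancel₀ _ (hpq i hpi).ne').symm
      _ ≤ _ := mul_le_mul_of_nonneg_right
          (le_ciSup (f := fun j : {j // 0 < p j} => p j / q j) (Set.finite_range _).bddAbove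
            ⟨i, hpi⟩) (hq i)
  · exact (not_lt.mp hpi).trans (mul_nonneg (iSup_div_nonneg hq) (hq i))

theorem sum_mul_le_mul_sum_mul {ι : Type*} (s : Finset ι) {w p q : ι → ℝ} {c : ℝ}
    (hw : ∀ i, 0 ≤ w i) (hpq : ∀ i, p i ≤ c * q i) :
    ∑ i ∈ s, w i * p i ≤ c * ∑ i ∈ s, w i * q i := by
  rw [mul_sum]
  exact sum_le_sum fun i _ =>
    (mul_le_mul_of_nonneg_left (hpq i) (hw i)).trans_eq (mul_left_comm _ _ _)

theorem pointwise_hG_guesswork_leakage_upper_bound_general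
    {X Y : Type*} [Fintype X] [Fintype Y]
    (PXY : X → Y → ℝ)
    (hnn : ∀ x y, 0 ≤ PXY x y)
    (y : Y)
    (habs : ∀ x, 0 < ∑ y', PXY x y' → 0 < PXY x y / ∑ x', PXY x' y)
    (h : ℕ → ℝ)
    (hhnn : ∀ n, 0 ≤ h n) :
    ∀ (n : ℕ) (K : X → Fin n → ℝ),
      (∀ x u, 0 ≤ K x u) → (∀ x, ∑ u, K x u = 1) →
      hGuesswork h (fun u => ∑ x, K x u * (∑ y', PXY x y')) ≤
        (⨆ x : {x : X // 0 < ∑ y', PXY x y'},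
            (∑ y', PXY x.1 y') / (PXY x.1 y / ∑ x', PXY x' y)) *
          hGuesswork h (fun u => ∑ x, K x u * (PXY x y / ∑ x', PXY x' y)) := by
  intro n K hK _
  have hcond : ∀ x, 0 ≤ PXY x y / ∑ x', PXY x' y := fun x =>
    div_nonneg (hnn x y) (sum_nonneg fun x' _ => hnn x' y)
  exact hGuesswork_le_mul_of_le hhnn (iSup_div_nonneg hcond) fun u =>
    sum_mul_le_mul_sum_mul _ (fun x => hK x u) (le_iSup_div_mul hcond habs)

/-- **Upper bound for the pointwise `h(G)`-guesswork leakage.**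
Let `P_{XY}` be a joint pmf on a finite set `𝒳 × 𝒴`, let `y` satisfy
`P_Y(y) > 0`, assume `P_{X|Y}(x|y) > 0` whenever `P_X(x) > 0`, and let
`h : ℕ → [0,∞)` be any function.  Then for every finite set `𝒰` (wlog `Fin n`)
and every channel `P_{U|X}`,
`min_G ∑ h(G(u)) P_U(u) ≤ (max_{x : P_X(x)>0} P_X(x)/P_{X|Y}(x|y)) · min_G ∑ h(G(u)) P_{U|Y}(u|y)`. -/
theorem pointwise_hG_guesswork_leakage_upper_bound
    {X Y : Type*} [Fintype X] [Fintype Y]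
    (PXY : X → Y → ℝ)
    (hnn : ∀ x y, 0 ≤ PXY x y)
    (hsum : ∑ x, ∑ y, PXY x y = 1)
    (y : Y)
    (hy : 0 < ∑ x, PXY x y)
    (habs : ∀ x, 0 < ∑ y', PXY x y' → 0 < PXY x y / ∑ x', PXY x' y)
    (h : ℕ → ℝ)
    (hhnn : ∀ n, 0 ≤ h n) :
    ∀ (n : ℕ) (K : X → Fin n → ℝ),
      (∀ x u, 0 ≤ K x u) → (∀ x, ∑ u, K x u = 1) →
      hGuesswork h (fun u => ∑ x, K x u * (∑ y', PXY x y')) ≤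
        (⨆ x : {x : X // 0 < ∑ y', PXY x y'},
            (∑ y', PXY x.1 y') / (PXY x.1 y / ∑ x', PXY x' y)) *
          hGuesswork h (fun u => ∑ x, K x u * (PXY x y / ∑ x', PXY x' y)) :=
  pointwise_hG_guesswork_leakage_upper_bound_general PXY hnn y habs h hhnn
end
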